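/- arXiv:math/0311357 — 4 statements merged into one kernel-verified Lean document; each statement's English description precedes it below -/
import Mathlib

section
/- The function f(k) = k^2 [ (1+1/k) ln(1+1/k) - 1/k ], defined for k in (1, ∞), is strictly increasing. -/
noncomputable def f (k : ℝ) : ℝ := k^2 * ((1 + 1/k) * Real.log (1 + 1/k) - 1/k)

/-! The derivative of `f` is `(2k + 1) log (1 + 1/k) - 2`, which is positive for all `k > 0` by
the bound `2x / (x + 2) < log (1 + x)` at `x = 1/k`. -/

open Real Set Topology

lemma f_eq_of_ne_zero {k : ℝ} (hk : k ≠ 0) : f k = (k ^ 2 + k) * log (1 + 1 / k) - k := by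
  simp only [f]
  field_simp

lemma hasDerivAt_f {k : ℝ} (hk : k ≠ 0) (hk' : k + 1 ≠ 0) :
    HasDerivAt f ((2 * k + 1) * log (1 + 1 / k) - 2) k := by
  have hlog_arg : 1 + 1 / k ≠ 0 := by
    rw [one_add_div hk]
    exact div_ne_zero hk' hk
  have hinner : HasDerivAt (fun x : ℝ => 1 + 1 / x) (-(k ^ 2)⁻¹) k := by
    simpa [one_div] using (hasDerivAt_inv hk).const_add 1
  have hpoly : HasDerivAt (fun x : ℝ => x ^ 2 + x) (2 * k + 1) k :=
    ((hasDerivAt_pow 2 k).add (hasDerivAt_id k)).congr_deriv (by ring)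
  have hg := (hpoly.mul ((hasDerivAt_log hlog_arg).comp k hinner)).sub (hasDerivAt_id k)
  have hf : f =ᶠ[𝓝 k] fun x => (x ^ 2 + x) * log (1 + 1 / x) - x := by
    filter_upwards [isOpen_ne.mem_nhds hk] with x hx using f_eq_of_ne_zero hx
  refine (hg.congr_of_eventuallyEq hf).congr_deriv ?_
  simp only [Function.comp_apply]
  field_simp
  ring

lemma two_lt_two_mul_add_one_mul_log {k : ℝ} (hk : 0 < k) :
    2 < (2 * k + 1) * log (1 + 1 / k) := by
  have h := lt_log_one_add_of_pos (one_div_pos.mpr hk)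
  have hform : 2 * (1 / k) / (1 / k + 2) = 2 / (2 * k + 1) := by
    field_simp
    ring
  rw [hform, div_lt_iff₀ (by positivity)] at h
  linarith

lemma strictMonoOn_f_Ioi_zero : StrictMonoOn f (Ioi 0) := by
  have hderiv : ∀ k ∈ Ioi (0 : ℝ), HasDerivAt f ((2 * k + 1) * log (1 + 1 / k) - 2) k :=
    fun k hk => hasDerivAt_f hk.ne' (by linarith [mem_Ioi.mp hk])
  refine strictMonoOn_of_deriv_pos (convex_Ioi 0)
    (fun k hk => (hderiv k hk).continuousAt.continuousWithinAt) fun k hk => ?_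
  rw [interior_Ioi] at hk
  rw [(hderiv k hk).deriv, sub_pos]
  exact two_lt_two_mul_add_one_mul_log hk

theorem f_strictMonoOn : StrictMonoOn f (Set.Ioi (1 : ℝ)) :=
  strictMonoOn_f_Ioi_zero.mono (Ioi_subset_Ioi zero_le_one)
end

section
/- If 0 < δ_M < 2 ln 2 - 1 (resp. 1/2 < δ_M < 1), where δ_M is the fractional part of M > 1, then the integer minimizer of n ↦ ln n + M/n is ⌊M⌋ (resp. ⌈M⌉). -/
noncomputable def F (n : ℕ) (M : ℝ) : ℝ := Real.log n + M / n

/-!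
`F (k + 1) M - F k M` has the sign of `crossing k - M`, where `crossing k = k (k + 1) log (1 + 1/k)`,
so `n ↦ F n M` decreases while `crossing n < M` and increases afterwards. Expanding
`log (1 + 1/k)` in odd powers of `1 / (2k + 1)` gives `k + (2 log 2 - 1) ≤ crossing k ≤ k + 1/2`,
which places the switch at `⌊M⌋` when the fractional part of `M` is below `2 log 2 - 1` and at
`⌈M⌉` when it is above `1/2`.
-/

open Real Set

-- Both bounds come from `log (1 + a⁻¹) = ∑ₖ 2 / (2k + 1) · t ^ (2k + 1)` with `t = 1 / (2a + 1)`: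
-- keep only the first term, or bound every coefficient by `2`.
lemma two_div_two_mul_add_one_le_log_one_add_inv {a : ℝ} (ha : 0 < a) :
    2 / (2 * a + 1) ≤ log (1 + a⁻¹) := by
  have h := le_hasSum (hasSum_log_one_add_inv ha) 0 fun k _ ↦ by positivity
  simpa [div_eq_mul_inv] using h

lemma log_one_add_inv_le {a : ℝ} (ha : 0 < a) :
    log (1 + a⁻¹) ≤ (2 * a + 1) / (2 * a * (a + 1)) := by
  set t : ℝ := 1 / (2 * a + 1) with ht
  have ht0 : 0 ≤ t := by positivity
  have ht1 : t < 1 := by rw [ht, div_lt_one (by positivity)]; linarith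
  have hgeom : HasSum (fun k : ℕ ↦ 2 * t * (t ^ 2) ^ k) (2 * t / (1 - t ^ 2)) := by
    simpa [div_eq_mul_inv] using
      (hasSum_geometric_of_lt_one (sq_nonneg t) (by nlinarith)).mul_left (2 * t)
  have hterm (k : ℕ) : 2 * (1 / (2 * k + 1)) * t ^ (2 * k + 1) ≤ 2 * t * (t ^ 2) ^ k := by
    have hcoef : 1 / (2 * (k : ℝ) + 1) ≤ 1 := by
      rw [div_le_one (by positivity)]; linarith [k.cast_nonneg (α := ℝ)]
    calc 2 * (1 / (2 * k + 1)) * t ^ (2 * k + 1)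
        ≤ 2 * 1 * t ^ (2 * k + 1) := by gcongr
      _ = 2 * t * (t ^ 2) ^ k := by ring
  calc log (1 + a⁻¹) ≤ 2 * t / (1 - t ^ 2) := hasSum_le hterm (hasSum_log_one_add_inv ha) hgeom
    _ = (2 * a + 1) / (2 * a * (a + 1)) := by
      have h1t : 1 - t ^ 2 = 4 * a * (a + 1) / (2 * a + 1) ^ 2 := by
        rw [ht]; field_simp; ring
      rw [h1t, ht]; field_simp; ring

/-- The paper's `f (k)` is `crossing k - k`. -/
noncomputable def crossing (a : ℝ) : ℝ := a * (a + 1) * log (1 + a⁻¹)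

lemma crossing_le {a : ℝ} (ha : 0 < a) : crossing a ≤ a + 1 / 2 := by
  have h := log_one_add_inv_le ha
  rw [le_div_iff₀ (by positivity)] at h
  unfold crossing
  linarith

lemma add_two_fifths_le_crossing {a : ℝ} (ha : 2 ≤ a) : a + 2 / 5 ≤ crossing a := by
  have h := two_div_two_mul_add_one_le_log_one_add_inv (a := a) (by linarith)
  rw [div_le_iff₀ (by positivity)] at h
  refine le_of_mul_le_mul_left ?_ (by positivity : (0 : ℝ) < 2 * a + 1)
  calc (2 * a + 1) * (a + 2 / 5) ≤ a * (a + 1) * 2 := by nlinarith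
    _ ≤ a * (a + 1) * (log (1 + a⁻¹) * (2 * a + 1)) := by gcongr
    _ = (2 * a + 1) * crossing a := by unfold crossing; ring

lemma crossing_one : crossing 1 = 2 * log 2 := by
  norm_num [crossing]

lemma add_two_mul_log_two_sub_one_le_crossing {k : ℕ} (hk : 1 ≤ k) :
    k + (2 * log 2 - 1) ≤ crossing k := by
  obtain rfl | hk2 := hk.eq_or_lt
  · norm_num [crossing_one]
  · have := add_two_fifths_le_crossing (a := k) (by exact_mod_cast hk2)
    linarith [log_two_lt_d9]

lemma F_succ_sub_F {k : ℕ} (hk : 0 < k) (M : ℝ) :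
    F (k + 1) M - F k M = (crossing k - M) / (k * (k + 1)) := by
  have hk0 : (0 : ℝ) < k := by exact_mod_cast hk
  have hlog : log ((k : ℝ) + 1) = log k + log (1 + (k : ℝ)⁻¹) := by
    rw [← log_mul hk0.ne' (by positivity), mul_add, mul_inv_cancel₀ hk0.ne', mul_one]
  simp only [F, crossing, Nat.cast_add, Nat.cast_one, hlog]
  field_simp
  ring

lemma F_le_F_succ_iff {k : ℕ} (hk : 0 < k) (M : ℝ) : F k M ≤ F (k + 1) M ↔ M ≤ crossing k := by
  have hk0 : (0 : ℝ) < k := by exact_mod_cast hk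
  rw [← sub_nonneg, F_succ_sub_F hk, le_div_iff₀ (by positivity), zero_mul, sub_nonneg]

lemma F_succ_le_F_iff {k : ℕ} (hk : 0 < k) (M : ℝ) : F (k + 1) M ≤ F k M ↔ crossing k ≤ M := by
  have hk0 : (0 : ℝ) < k := by exact_mod_cast hk
  rw [← sub_nonpos, F_succ_sub_F hk, div_le_iff₀ (by positivity), zero_mul, sub_nonpos]

lemma isMinOn_of_succ_le_of_le_succ {α : Type*} [Preorder α] {f : ℕ → α} {a m : ℕ}
    (hdown : ∀ k, a ≤ k → k < m → f (k + 1) ≤ f k) (hup : ∀ k, m ≤ k → f k ≤ f (k + 1)) :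
    IsMinOn f (Ici a) m := by
  refine isMinOn_iff.2 fun n (hn : a ≤ n) ↦ ?_
  rcases le_total n m with hnm | hmn
  · exact Nat.decreasingInduction' (P := fun k ↦ f m ≤ f k)
      (fun k hkm hnk ih ↦ ih.trans (hdown k (hn.trans hnk) hkm)) hnm le_rfl
  · exact Nat.rel_of_forall_rel_succ_of_le_of_le (· ≤ ·) hup le_rfl hmn

lemma isMinOn_F {M : ℝ} {m : ℕ} (hm : 0 < m) (hdown : ∀ k, 0 < k → k < m → crossing k ≤ M)
    (hup : ∀ k, m ≤ k → M ≤ crossing k) : IsMinOn (F · M) (Ici 1) m :=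
  isMinOn_of_succ_le_of_le_succ
    (fun k hk hkm ↦ (F_succ_le_F_iff hk M).2 (hdown k hk hkm))
    (fun k hk ↦ (F_le_F_succ_iff (hm.trans_le hk) M).2 (hup k hk))

theorem fract_determines_minimizer (M : ℝ) (hM : 1 < M) :
    (0 < Int.fract M → Int.fract M < 2 * Real.log 2 - 1 →
      ∀ n : ℕ, 1 ≤ n → F ⌊M⌋₊ M ≤ F n M) ∧
    (1/2 < Int.fract M → Int.fract M < 1 →
      ∀ n : ℕ, 1 ≤ n → F ⌈M⌉₊ M ≤ F n M) := by
  set m := ⌊M⌋₊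
  have hm : 0 < m := Nat.floor_pos.2 hM.le
  have hfract : Int.fract M = M - m := by
    rw [← Int.self_sub_floor, natCast_floor_eq_intCast_floor (by linarith)]
  have hcross_le (k : ℕ) (hk : 0 < k) : crossing k ≤ k + 1 / 2 := crossing_le (by exact_mod_cast hk)
  have hle_cross (k : ℕ) (hk : 0 < k) : (k : ℝ) + (2 * log 2 - 1) ≤ crossing k :=
    add_two_mul_log_two_sub_one_le_crossing hk
  constructor
  · intro _ hδ n hn
    refine isMinOn_iff.1 (isMinOn_F hm (fun k hk hkm ↦ ?_) fun k hkm ↦ ?_) n hn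
    · have : (k : ℝ) + 1 ≤ m := by exact_mod_cast hkm
      linarith [hcross_le k hk, Nat.floor_le (by linarith : 0 ≤ M)]
    · have : (m : ℝ) ≤ k := by exact_mod_cast hkm
      linarith [hle_cross k (hm.trans_le hkm)]
  · intro hδ _ n hn
    have hMm : M < m + 1 := Nat.lt_floor_add_one M
    have hceil : ⌈M⌉₊ = m + 1 :=
      (Nat.ceil_eq_iff m.succ_ne_zero).2 ⟨by push_cast; linarith, by push_cast; linarith⟩
    rw [hceil]
    refine isMinOn_iff.1 (isMinOn_F m.succ_pos (fun k hk hkm ↦ ?_) fun k hkm ↦ ?_) n hn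
    · have : (k : ℝ) ≤ m := by exact_mod_cast Nat.lt_succ_iff.1 hkm
      linarith [hcross_le k hk]
    · have : (m : ℝ) + 1 ≤ k := by exact_mod_cast hkm
      linarith [hle_cross k (m.succ_pos.trans_le hkm), log_two_gt_d9]
end

section
/- Let β₁,…,β_n > 0 and ε₀, α₂,…,α_n > 0 with β₁⋯β_n > ε₀·α₂⋯α_n. Then the polynomial p(λ) = (λ+β₁)⋯(λ+β_n) - ε₀·α₂⋯α_n has no root λ ∈ ℂ with Re(λ) ≥ 0. -/
theorem feedback_stability (n : ℕ) (hn : 1 ≤ n)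
    (β : Fin n → ℝ) (hβ : ∀ i, 0 < β i)
    (ε₀ : ℝ) (hε : 0 < ε₀)
    (α : Fin (n-1) → ℝ) (hα : ∀ i, 0 < α i)
    (h : ε₀ * ∏ i, α i < ∏ i, β i) :
    ∀ lam : ℂ, 0 ≤ lam.re →
      (∏ i, (lam + (β i : ℂ))) - ((ε₀ * ∏ i, α i : ℝ) : ℂ) ≠ 0 := by
  intro lam hre heq
  rw [sub_eq_zero] at heq
  have hnorm : ‖∏ i, (lam + (β i : ℂ))‖ = ε₀ * ∏ i, α i := by
    rw [heq, Complex.norm_real]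
    exact Real.norm_of_nonneg (mul_pos hε (Finset.prod_pos fun i _ => hα i)).le
  have hlb : ∏ i, β i ≤ ‖∏ i, (lam + (β i : ℂ))‖ := by
    rw [norm_prod]
    apply Finset.prod_le_prod (fun i _ => (hβ i).le)
    intro i _
    calc β i ≤ lam.re + β i := by linarith
      _ = (lam + (β i : ℂ)).re := by simp
      _ ≤ ‖lam + (β i : ℂ)‖ := Complex.re_le_norm _
  rw [hnorm] at hlb
  linarith
end

section
/- Let β₁,…,β_n > 0, α₂,…,α_n > 0, α₁ > 0, ℓ > 0, ε > 0, with β₁⋯β_n > ε·α₂⋯α_n. For Ĝ(s) = (α₁⋯α_n)/((s+ℓ)[(s+β₁)⋯(s+β_n) − ε·α₂⋯α_n]), the supremum over real ω of |Ĝ(iω)| equals (α₁⋯α_n)/(ℓ(β₁⋯β_n − ε·α₂⋯α_n)), attained at ω = 0. -/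
/-! On the imaginary axis every factor `iω + b` with `b ≥ 0` has modulus at least `b`, so
`|(iω+β₁)⋯(iω+β_n)| ≥ β₁⋯β_n`; the triangle inequality then bounds the feedback denominator
below by `β₁⋯β_n − ε·α₂⋯α_n > 0`, and the factor `iω + ℓ` by `ℓ`. Both bounds are equalities
at `ω = 0`, where the denominator is real and positive. -/

open Complex

lemma le_norm_I_mul_add_ofReal {b : ℝ} (hb : 0 ≤ b) (ω : ℝ) : b ≤ ‖I * ω + b‖ := by
  simpa [abs_of_nonneg hb] using abs_re_le_norm (I * ω + b)

lemma prod_le_norm_prod_I_mul_add_ofReal {ι : Type*} (s : Finset ι) {β : ι → ℝ}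
    (hβ : ∀ i ∈ s, 0 ≤ β i) (ω : ℝ) : ∏ i ∈ s, β i ≤ ‖∏ i ∈ s, (I * ω + β i)‖ := by
  rw [norm_prod]
  exact Finset.prod_le_prod hβ fun i hi => le_norm_I_mul_add_ofReal (hβ i hi) ω

lemma sub_le_norm_sub_ofReal {z : ℂ} {a c : ℝ} (ha : a ≤ ‖z‖) (hc : 0 ≤ c) :
    a - c ≤ ‖z - c‖ := by
  have h := norm_sub_norm_le z c
  rw [norm_real, Real.norm_of_nonneg hc] at h
  linarith

lemma isGreatest_range_norm_ofReal_div {A d : ℝ} (hA : 0 ≤ A) (hd : 0 < d) {D : ℝ → ℂ}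
    (hD₀ : D 0 = d) (hD : ∀ ω, d ≤ ‖D ω‖) :
    IsGreatest (Set.range fun ω => ‖(A : ℂ) / D ω‖) (A / d) := by
  refine ⟨⟨0, ?_⟩, ?_⟩
  · dsimp only
    rw [hD₀, ← ofReal_div, norm_real, Real.norm_of_nonneg (div_nonneg hA hd.le)]
  · rintro _ ⟨ω, rfl⟩
    dsimp only
    rw [norm_div, norm_real, Real.norm_of_nonneg hA]
    exact div_le_div_of_nonneg_left hA hd (hD ω)

open Complex in
theorem gain_is_sup_feedback_general (n : ℕ)
    (α₁ : ℝ) (hα₁ : 0 < α₁) (α : Fin (n-1) → ℝ) (hα : ∀ i, 0 < α i)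
    (β : Fin n → ℝ) (hβ : ∀ i, 0 < β i)
    (ℓ ε : ℝ) (hℓ : 0 < ℓ) (hε : 0 < ε)
    (hstab : ε * ∏ i, α i < ∏ i, β i) :
    IsGreatest
      (Set.range (fun ω : ℝ =>
        ‖(((α₁ * ∏ i, α i : ℝ) /
          ((Complex.I * ω + ℓ) *
            ((∏ i, (Complex.I * ω + (β i : ℂ))) - ((ε * ∏ i, α i : ℝ) : ℂ)))) : ℂ)‖))
      ((α₁ * ∏ i, α i) / (ℓ * ((∏ i, β i) - ε * ∏ i, α i))) := by
  have hα_prod : 0 < ∏ i, α i := Finset.prod_pos fun i _ => hα i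
  have hgap : 0 < (∏ i, β i) - ε * ∏ i, α i := sub_pos.mpr hstab
  refine isGreatest_range_norm_ofReal_div (mul_pos hα₁ hα_prod).le (mul_pos hℓ hgap)
    (by simp) fun ω => ?_
  have hloop : (∏ i, β i) - ε * ∏ i, α i ≤
      ‖(∏ i, (I * ω + (β i : ℂ))) - ((ε * ∏ i, α i : ℝ) : ℂ)‖ :=
    sub_le_norm_sub_ofReal (prod_le_norm_prod_I_mul_add_ofReal _ (fun i _ => (hβ i).le) ω)
      (mul_pos hε hα_prod).le
  rw [norm_mul]
  exact mul_le_mul (le_norm_I_mul_add_ofReal hℓ.le ω) hloop hgap.le (norm_nonneg _)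

open Complex in
theorem gain_is_sup_feedback (n : ℕ) (hn : 1 ≤ n)
    (α₁ : ℝ) (hα₁ : 0 < α₁) (α : Fin (n-1) → ℝ) (hα : ∀ i, 0 < α i)
    (β : Fin n → ℝ) (hβ : ∀ i, 0 < β i)
    (ℓ ε : ℝ) (hℓ : 0 < ℓ) (hε : 0 < ε)
    (hstab : ε * ∏ i, α i < ∏ i, β i) :
    IsGreatest
      (Set.range (fun ω : ℝ =>
        ‖(((α₁ * ∏ i, α i : ℝ) /
          ((Complex.I * ω + ℓ) *
            ((∏ i, (Complex.I * ω + (β i : ℂ))) - ((ε * ∏ i, α i : ℝ) : ℂ)))) : ℂ)‖))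
      ((α₁ * ∏ i, α i) / (ℓ * ((∏ i, β i) - ε * ∏ i, α i))) :=
  gain_is_sup_feedback_general n α₁ hα₁ α hα β hβ ℓ ε hℓ hε hstab
end
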